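/- Let H be a real Hilbert space and let f_1,…,f_k : H → ℝ each be locally Lipschitz near x ∈ H. Let (ε_j) be a sequence of positive reals converging to 0, let (x_j) be a sequence in H converging to x in norm, and let (w_j) be a sequence in H converging weakly to w with w_j ∈ F_{ε_j}(x_j) for all j ≥ 1. Then w ∈ F_0(x) = convexHull(⋃_{i=1}^k ∂f_i(x)). -/

import Mathlib

open Filter Topology RealInnerProductSpace

/-- Clarke generalized directional derivative
`f°(x;v) = limsup_{y→x, t↓0} (f(y+tv) − f(y))/t`. -/
noncomputable def clarkeDir {H : Type*} [NormedAddCommGroup H] [InnerProductSpace ℝ H]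
    (f : H → ℝ) (x v : H) : ℝ :=
  limsup (fun p : H × ℝ => (f (p.1 + p.2 • v) - f p.1) / p.2)
    ((𝓝 x) ×ˢ (𝓝[>] (0 : ℝ)))

/-- Clarke subdifferential, with the dual of `H` identified with `H` via the Riesz map:
`∂f(x) = {w : ⟪w, v⟫ ≤ f°(x;v) for all v}`. -/
def clarkeSubdiff {H : Type*} [NormedAddCommGroup H] [InnerProductSpace ℝ H]
    (f : H → ℝ) (x : H) : Set H :=
  {w : H | ∀ v : H, ⟪w, v⟫ ≤ clarkeDir f x v}

/-- Goldstein ε-subdifferential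
`∂_ε f(x) = closure (convexHull (⋃_{y ∈ closedBall x ε} ∂f(y)))`. -/
def goldsteinSubdiff {H : Type*} [NormedAddCommGroup H] [InnerProductSpace ℝ H]
    (f : H → ℝ) (ε : ℝ) (x : H) : Set H :=
  closure (convexHull ℝ (⋃ y ∈ Metric.closedBall x ε, clarkeSubdiff f y))

/-- `f` is locally Lipschitz near `x`: Lipschitz on some open ball around `x`. -/
def LocallyLipschitzNear {H : Type*} [NormedAddCommGroup H]
    (f : H → ℝ) (x : H) : Prop :=
  ∃ ε > 0, ∃ L : NNReal, LipschitzOnWith L f (Metric.ball x ε)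

/-- Multiobjective ε-subdifferential `F_ε(x) = closure (convexHull (⋃ i, ∂_ε f_i(x)))`. -/
def multiSubdiff {H : Type*} [NormedAddCommGroup H] [InnerProductSpace ℝ H]
    {k : ℕ} (f : Fin k → H → ℝ) (ε : ℝ) (x : H) : Set H :=
  closure (convexHull ℝ (⋃ i : Fin k, goldsteinSubdiff (f i) ε x))

/-- The weak topology on `H`: the topology induced by the functionals `⟪·, v⟫`, `v : H`. -/
noncomputable def weakTopology (H : Type*) [NormedAddCommGroup H] [InnerProductSpace ℝ H] :
    TopologicalSpace H :=
  ⨅ v : H, TopologicalSpace.induced (fun x : H => ⟪x, v⟫) inferInstance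

/-!
The Clarke directional derivative `v ↦ f°(x;v)` of a locally Lipschitz function is sublinear and
bounded by `L‖v‖`, so by Hahn–Banach and Riesz every value `f°(x;v)` is attained as `⟪a, v⟫` by
some `a ∈ ∂f(x)`; moreover `∂f(x)` is convex, bounded and weakly closed, hence weakly compact, and
so `D = convexHull (⋃ i, ∂f_i(x))` is weakly compact and in particular closed. If `w ∉ D`, a
separating direction `v` gives `f_i°(x;v) < u < ⟪w, v⟫` for all `i`. By upper semicontinuity of
`f_i°(·;v)` the bound `f_i°(y;v) ≤ u` persists for `y` near `x`, hence on the balls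
`closedBall x_j ε_j` for large `j`, so `⟪w_j, v⟫ ≤ u` there, contradicting `⟪w_j, v⟫ → ⟪w, v⟫`.
-/

open Set

section ConvexHull

variable {E : Type*} [AddCommGroup E] [Module ℝ E] [TopologicalSpace E] [ContinuousAdd E]
  [ContinuousSMul ℝ E]

theorem isCompact_convexJoin {s t : Set E} (hs : IsCompact s) (ht : IsCompact t) :
    IsCompact (convexJoin ℝ s t) := by
  have h : convexJoin ℝ s t =
      (fun p : E × E × ℝ => (1 - p.2.2) • p.1 + p.2.2 • p.2.1) '' s ×ˢ t ×ˢ Icc 0 1 := by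
    ext z
    simp only [mem_convexJoin, segment_eq_image, mem_image, mem_prod, Prod.exists]
    aesop
  rw [h]
  exact (hs.prod (ht.prod isCompact_Icc)).image (by fun_prop)

theorem isCompact_convexHull_union {s t : Set E} (hs : IsCompact (convexHull ℝ s))
    (ht : IsCompact (convexHull ℝ t)) : IsCompact (convexHull ℝ (s ∪ t)) := by
  rcases s.eq_empty_or_nonempty with rfl | hs'
  · simpa using ht
  rcases t.eq_empty_or_nonempty with rfl | ht'
  · simpa using hs
  rw [convexHull_union hs' ht']
  exact isCompact_convexJoin hs ht

theorem isCompact_convexHull_iUnion {ι : Type*} [Finite ι] {K : ι → Set E}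
    (hconv : ∀ i, Convex ℝ (K i)) (hK : ∀ i, IsCompact (K i)) :
    IsCompact (convexHull ℝ (⋃ i, K i)) := by
  classical
  have := Fintype.ofFinite ι
  suffices ∀ s : Finset ι, IsCompact (convexHull ℝ (⋃ i ∈ s, K i)) by
    simpa using this Finset.univ
  intro s
  induction s using Finset.induction_on with
  | empty => simp
  | insert i s _ ih =>
    rw [Finset.set_biUnion_insert]
    exact isCompact_convexHull_union ((hconv i).convexHull_eq.symm ▸ hK i) ih

end ConvexHull

theorem isClosed_convexHull_iUnion_of_isCompact_toWeakSpace {E : Type*} [NormedAddCommGroup E]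
    [NormedSpace ℝ E] {ι : Type*} [Finite ι] {K : ι → Set E} (hconv : ∀ i, Convex ℝ (K i))
    (hK : ∀ i, IsCompact (toWeakSpace ℝ E '' K i)) : IsClosed (convexHull ℝ (⋃ i, K i)) := by
  have hcpt : IsCompact (toWeakSpace ℝ E '' convexHull ℝ (⋃ i, K i)) := by
    rw [← LinearEquiv.coe_toLinearMap, LinearMap.image_convexHull, image_iUnion]
    exact isCompact_convexHull_iUnion (fun i => (hconv i).linear_image _) hK
  have := hcpt.isClosed.preimage (toWeakSpaceCLM ℝ E).continuous
  rwa [show ⇑(toWeakSpaceCLM ℝ E) = toWeakSpace ℝ E from rfl,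
    preimage_image_eq _ (toWeakSpace ℝ E).injective] at this

section WeakTopology

variable {H : Type*} [NormedAddCommGroup H] [InnerProductSpace ℝ H]

theorem WeakSpace.continuous_inner_left (v : H) :
    Continuous fun w : WeakSpace ℝ H => ⟪(toWeakSpace ℝ H).symm w, v⟫ :=
  (WeakBilin.eval_continuous (topDualPairing ℝ H).flip (innerSL ℝ v)).congr fun _ =>
    real_inner_comm _ _

variable [CompleteSpace H]

theorem InnerProductSpace.apply_toDual_symm_comm (φ ψ : StrongDual ℝ H) :
    φ ((toDual ℝ H).symm ψ) = ψ ((toDual ℝ H).symm φ) := by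
  rw [← toDual_symm_apply, ← toDual_symm_apply, real_inner_comm]

noncomputable def weakSpaceHomeomorphWeakDual : WeakSpace ℝ H ≃ₜ WeakDual ℝ H where
  toEquiv := (InnerProductSpace.toDual ℝ H).toEquiv
  continuous_toFun := WeakBilin.continuous_of_continuous_eval _ fun v =>
    WeakSpace.continuous_inner_left v
  continuous_invFun := WeakBilin.continuous_of_continuous_eval _ fun φ =>
    (WeakBilin.eval_continuous (topDualPairing ℝ H) ((InnerProductSpace.toDual ℝ H).symm φ)).congr
      fun ψ => InnerProductSpace.apply_toDual_symm_comm ψ φ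

theorem isCompact_toWeakSpace_closedBall (r : ℝ) :
    IsCompact (toWeakSpace ℝ H '' Metric.closedBall 0 r) := by
  have hball : toWeakSpace ℝ H '' Metric.closedBall 0 r =
      weakSpaceHomeomorphWeakDual ⁻¹' (WeakDual.toStrongDual ⁻¹' Metric.closedBall 0 r) := by
    ext w
    simp only [LinearEquiv.image_eq_preimage_symm, mem_preimage, mem_closedBall_zero_iff]
    change _ ↔ ‖InnerProductSpace.toDual ℝ H ((toWeakSpace ℝ H).symm w)‖ ≤ r
    rw [LinearIsometryEquiv.norm_map]
  rw [hball, Homeomorph.isCompact_preimage]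
  exact WeakDual.isCompact_closedBall 0 r

end WeakTopology

theorem LinearMap.exists_le_sublinear_eq {E : Type*} [AddCommGroup E] [Module ℝ E] (N : E → ℝ)
    (N_hom : ∀ c : ℝ, 0 < c → ∀ x, N (c • x) = c * N x) (N_add : ∀ x y, N (x + y) ≤ N x + N y)
    (v : E) : ∃ g : E →ₗ[ℝ] ℝ, (∀ x, g x ≤ N x) ∧ g v = N v := by
  have N_zero : N 0 = 0 := by
    have h := N_hom 2 two_pos (0 : E)
    rw [smul_zero] at h
    linarith
  have N_smul_ge : ∀ c : ℝ, c * N v ≤ N (c • v) := by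
    intro c
    rcases lt_trichotomy c 0 with hc | rfl | hc
    · have h := N_add (c • v) ((-c) • v)
      rw [← add_smul, add_neg_cancel, zero_smul, N_zero, N_hom _ (neg_pos.2 hc)] at h
      linarith
    · simp [N_zero]
    · exact (N_hom c hc v).ge
  have hker : ∀ c : ℝ, c • v = 0 → RingHom.id ℝ c • N v = 0 := by
    intro c hc
    have h₁ := N_smul_ge c
    have h₂ := N_smul_ge (-c)
    rw [hc, N_zero] at h₁
    rw [neg_smul, hc, neg_zero, N_zero] at h₂
    simp only [RingHom.id_apply, smul_eq_mul]
    linarith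
  obtain ⟨g, hgf, hgN⟩ := exists_extension_of_le_sublinear
    (LinearPMap.mkSpanSingleton' v (N v) hker) N N_hom N_add (by
      rintro ⟨_, hx⟩
      obtain ⟨c, rfl⟩ := Submodule.mem_span_singleton.1 hx
      rw [LinearPMap.mkSpanSingleton'_apply]
      exact N_smul_ge c)
  refine ⟨g, hgN, ?_⟩
  rw [← LinearPMap.mkSpanSingleton'_apply_self v (N v) hker (Submodule.mem_span_singleton_self v)]
  exact hgf ⟨v, _⟩

section DiffQuot

abbrev clarkeFilter {X : Type*} [TopologicalSpace X] (x : X) : Filter (X × ℝ) := 𝓝 x ×ˢ 𝓝[>] 0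

theorem tendsto_mul_snd_clarkeFilter {X : Type*} [TopologicalSpace X] (x : X) {c : ℝ}
    (hc : 0 < c) : Tendsto (fun p : X × ℝ => (p.1, c * p.2)) (clarkeFilter x) (clarkeFilter x) := by
  have ht : Tendsto (fun p : X × ℝ => p.2) (clarkeFilter x) (𝓝 0) :=
    tendsto_snd.mono_right nhdsWithin_le_nhds
  refine tendsto_fst.prodMk (tendsto_nhdsWithin_iff.2 ⟨?_, ?_⟩)
  · simpa using ht.const_mul c
  · exact (tendsto_snd.eventually self_mem_nhdsWithin).mono fun p hp => mul_pos hc hp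

variable {E : Type*} [NormedAddCommGroup E] [NormedSpace ℝ E]

noncomputable def diffQuot (f : E → ℝ) (v : E) (p : E × ℝ) : ℝ := (f (p.1 + p.2 • v) - f p.1) / p.2

theorem tendsto_add_smul_clarkeFilter (x v : E) :
    Tendsto (fun p : E × ℝ => (p.1 + p.2 • v, p.2)) (clarkeFilter x) (clarkeFilter x) := by
  have ht : Tendsto (fun p : E × ℝ => p.2) (clarkeFilter x) (𝓝 0) :=
    tendsto_snd.mono_right nhdsWithin_le_nhds
  refine Tendsto.prodMk ?_ tendsto_snd
  simpa using tendsto_fst.add (ht.smul_const v)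

variable {f : E → ℝ} {L : NNReal} {U : Set E} {x : E}

theorem eventually_abs_diffQuot_le (hL : LipschitzOnWith L f U) (hU : U ∈ 𝓝 x) (v : E) :
    ∀ᶠ p in clarkeFilter x, |diffQuot f v p| ≤ L * ‖v‖ := by
  filter_upwards [tendsto_fst.eventually hU,
    (tendsto_fst.comp (tendsto_add_smul_clarkeFilter x v)).eventually hU,
    tendsto_snd.eventually self_mem_nhdsWithin] with p hp hpv (ht : 0 < p.2)
  rw [diffQuot, abs_div, abs_of_pos ht, div_le_iff₀ ht]
  calc |f (p.1 + p.2 • v) - f p.1| ≤ L * dist (p.1 + p.2 • v) p.1 := hL.dist_le_mul _ hpv _ hp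
    _ = L * ‖v‖ * p.2 := by
      rw [dist_eq_norm, add_sub_cancel_left, norm_smul, Real.norm_of_nonneg ht.le]; ring

theorem isBoundedUnder_diffQuot_comp (hL : LipschitzOnWith L f U) (hU : U ∈ 𝓝 x)
    {α : Type*} {F : Filter α} {ψ : α → E × ℝ} (hψ : Tendsto ψ F (clarkeFilter x)) (v : E) :
    IsBoundedUnder (· ≤ ·) F (diffQuot f v ∘ ψ) ∧ IsBoundedUnder (· ≥ ·) F (diffQuot f v ∘ ψ) :=
  isBoundedUnder_le_abs.1 (isBoundedUnder_of_eventually_le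
    (hψ.eventually (eventually_abs_diffQuot_le hL hU v)))

end DiffQuot

theorem LocallyLipschitzNear.exists_lipschitzOnWith {E : Type*} [NormedAddCommGroup E]
    {f : E → ℝ} {x : E} (hf : LocallyLipschitzNear f x) :
    ∃ L : NNReal, ∃ U ∈ 𝓝 x, LipschitzOnWith L f U := by
  obtain ⟨δ, hδ, L, hL⟩ := hf
  exact ⟨L, _, Metric.ball_mem_nhds x hδ, hL⟩

section Clarke

variable {H : Type*} [NormedAddCommGroup H] [InnerProductSpace ℝ H]
  {f : H → ℝ} {L : NNReal} {U : Set H} {x : H}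

theorem clarkeDir_eq_limsup (f : H → ℝ) (x v : H) :
    clarkeDir f x v = limsup (diffQuot f v) (clarkeFilter x) := rfl

theorem clarkeDir_le_mul_norm (hL : LipschitzOnWith L f U) (hU : U ∈ 𝓝 x) (v : H) :
    clarkeDir f x v ≤ L * ‖v‖ :=
  limsup_le_of_le (isBoundedUnder_diffQuot_comp hL hU tendsto_id v).2.isCoboundedUnder_le
    (eventually_abs_diffQuot_le hL hU v |>.mono fun _ hp => (abs_le.1 hp).2)

theorem limsup_diffQuot_comp_le (hL : LipschitzOnWith L f U) (hU : U ∈ 𝓝 x)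
    {ψ : H × ℝ → H × ℝ} (hψ : Tendsto ψ (clarkeFilter x) (clarkeFilter x)) (v : H) :
    limsup (diffQuot f v ∘ ψ) (clarkeFilter x) ≤ clarkeDir f x v :=
  hψ.limsup_comp_le_limsup
    (isBoundedUnder_diffQuot_comp hL hU (tendsto_map' hψ) v).2.isCoboundedUnder_le
    (isBoundedUnder_diffQuot_comp hL hU tendsto_id v).1

theorem clarkeDir_add_le (hL : LipschitzOnWith L f U) (hU : U ∈ 𝓝 x) (u v : H) :
    clarkeDir f x (u + v) ≤ clarkeDir f x u + clarkeDir f x v := by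
  set φ : H × ℝ → H × ℝ := fun p => (p.1 + p.2 • v, p.2)
  have hφ : Tendsto φ (clarkeFilter x) (clarkeFilter x) := tendsto_add_smul_clarkeFilter x v
  have hsplit : diffQuot f (u + v) = diffQuot f u ∘ φ + diffQuot f v := by
    funext p
    simp only [diffQuot, φ, Function.comp, Pi.add_apply]
    rw [smul_add, ← add_assoc, add_right_comm, ← add_div, sub_add_sub_cancel]
  rw [clarkeDir_eq_limsup, hsplit]
  obtain ⟨hu₁, hu₂⟩ := isBoundedUnder_diffQuot_comp hL hU hφ u
  obtain ⟨hv₁, hv₂⟩ := isBoundedUnder_diffQuot_comp hL hU tendsto_id v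
  exact (limsup_add_le hu₂ hu₁ hv₂.isCoboundedUnder_le hv₁).trans
    (add_le_add_left (limsup_diffQuot_comp_le hL hU hφ u) _)

theorem clarkeDir_smul_le (hL : LipschitzOnWith L f U) (hU : U ∈ 𝓝 x) {c : ℝ} (hc : 0 < c)
    (v : H) : clarkeDir f x (c • v) ≤ c * clarkeDir f x v := by
  set ψ : H × ℝ → H × ℝ := fun p => (p.1, c * p.2)
  have hψ : Tendsto ψ (clarkeFilter x) (clarkeFilter x) := tendsto_mul_snd_clarkeFilter x hc
  have hscale : diffQuot f (c • v) = (c * ·) ∘ (diffQuot f v ∘ ψ) := by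
    funext p
    simp only [diffQuot, ψ, Function.comp, smul_smul]
    rw [mul_comm p.2 c, mul_div_assoc', mul_div_mul_left _ _ hc.ne']
  obtain ⟨h₁, h₂⟩ := isBoundedUnder_diffQuot_comp hL hU hψ v
  rw [clarkeDir_eq_limsup, hscale, ← (monotone_mul_left_of_nonneg hc.le).map_limsup_of_continuousAt
    _ (continuous_const_mul c).continuousAt h₁ h₂.isCoboundedUnder_le]
  exact mul_le_mul_of_nonneg_left (limsup_diffQuot_comp_le hL hU hψ v) hc.le

theorem clarkeDir_smul (hL : LipschitzOnWith L f U) (hU : U ∈ 𝓝 x) {c : ℝ} (hc : 0 < c)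
    (v : H) : clarkeDir f x (c • v) = c * clarkeDir f x v := by
  refine (clarkeDir_smul_le hL hU hc v).antisymm ?_
  have h := clarkeDir_smul_le hL hU (inv_pos.2 hc) (c • v)
  rw [inv_smul_smul₀ hc.ne'] at h
  calc c * clarkeDir f x v ≤ c * (c⁻¹ * clarkeDir f x (c • v)) := by gcongr
    _ = clarkeDir f x (c • v) := by field_simp

theorem clarkeDir_eventually_le (hL : LipschitzOnWith L f U) (hU : U ∈ 𝓝 x) {v : H} {c : ℝ}
    (hc : clarkeDir f x v < c) : ∀ᶠ y in 𝓝 x, clarkeDir f y v ≤ c := by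
  have hev : ∀ᶠ p in clarkeFilter x, diffQuot f v p < c :=
    eventually_lt_of_limsup_lt hc (isBoundedUnder_diffQuot_comp hL hU tendsto_id v).1
  obtain ⟨U', hU', V, hV, hUV⟩ := mem_prod_iff.1 hev
  filter_upwards [eventually_mem_nhds_iff.2 hU', eventually_mem_nhds_iff.2 hU] with y hy hyU
  exact limsup_le_of_le (isBoundedUnder_diffQuot_comp hL hyU tendsto_id v).2.isCoboundedUnder_le
    (eventually_of_mem (prod_mem_prod hy hV) fun p hp => (hUV hp).le)

theorem convex_clarkeSubdiff (f : H → ℝ) (x : H) : Convex ℝ (clarkeSubdiff f x) := by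
  intro a ha b hb s t hs ht hst v
  rw [inner_add_left, real_inner_smul_left, real_inner_smul_left]
  calc s * ⟪a, v⟫ + t * ⟪b, v⟫ ≤ s * clarkeDir f x v + t * clarkeDir f x v := by
        gcongr
        exacts [ha v, hb v]
    _ = clarkeDir f x v := by rw [← add_mul, hst, one_mul]

theorem norm_le_of_mem_clarkeSubdiff (hL : LipschitzOnWith L f U) (hU : U ∈ 𝓝 x) {a : H}
    (ha : a ∈ clarkeSubdiff f x) : ‖a‖ ≤ L := by
  have h := (ha a).trans (clarkeDir_le_mul_norm hL hU a)
  rw [real_inner_self_eq_norm_sq] at h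
  nlinarith [norm_nonneg a]

theorem exists_mem_clarkeSubdiff_inner_eq [CompleteSpace H] (hL : LipschitzOnWith L f U)
    (hU : U ∈ 𝓝 x) (v : H) : ∃ a ∈ clarkeSubdiff f x, ⟪a, v⟫ = clarkeDir f x v := by
  obtain ⟨g, hgN, hgv⟩ := LinearMap.exists_le_sublinear_eq (clarkeDir f x)
    (fun _ hc u => clarkeDir_smul hL hU hc u) (clarkeDir_add_le hL hU) v
  have hg : ∀ u, ‖g u‖ ≤ L * ‖u‖ := by
    intro u
    have h := (hgN (-u)).trans (clarkeDir_le_mul_norm hL hU (-u))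
    rw [map_neg, norm_neg] at h
    exact abs_le.2 ⟨by linarith, (hgN u).trans (clarkeDir_le_mul_norm hL hU u)⟩
  set a := (InnerProductSpace.toDual ℝ H).symm (g.mkContinuous L hg)
  have ha : ∀ u, ⟪a, u⟫ = g u := fun _ => InnerProductSpace.toDual_symm_apply
  exact ⟨a, fun u => (ha u).trans_le (hgN u), (ha v).trans hgv⟩

theorem isClosed_toWeakSpace_clarkeSubdiff (f : H → ℝ) (x : H) :
    IsClosed (toWeakSpace ℝ H '' clarkeSubdiff f x) := by
  simp only [clarkeSubdiff, LinearEquiv.image_eq_preimage_symm, ofPred_forall]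
  exact isClosed_iInter fun v => isClosed_le (WeakSpace.continuous_inner_left v) continuous_const

theorem isCompact_toWeakSpace_clarkeSubdiff [CompleteSpace H] (hL : LipschitzOnWith L f U)
    (hU : U ∈ 𝓝 x) : IsCompact (toWeakSpace ℝ H '' clarkeSubdiff f x) :=
  (isCompact_toWeakSpace_closedBall L).of_isClosed_subset
    (isClosed_toWeakSpace_clarkeSubdiff f x)
    (image_mono fun _ ha => mem_closedBall_zero_iff.2 (norm_le_of_mem_clarkeSubdiff hL hU ha))

theorem isClosed_convexHull_iUnion_clarkeSubdiff [CompleteSpace H] {k : ℕ}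
    {f : Fin k → H → ℝ} (hf : ∀ i, LocallyLipschitzNear (f i) x) :
    IsClosed (convexHull ℝ (⋃ i, clarkeSubdiff (f i) x)) :=
  isClosed_convexHull_iUnion_of_isCompact_toWeakSpace (fun i => convex_clarkeSubdiff (f i) x)
    fun i => by
      obtain ⟨L, U, hU, hL⟩ := (hf i).exists_lipschitzOnWith
      exact isCompact_toWeakSpace_clarkeSubdiff hL hU

theorem multiSubdiff_subset_halfSpace {k : ℕ} (f : Fin k → H → ℝ) (ε : ℝ) (x v : H) {c : ℝ}
    (h : ∀ i, ∀ y ∈ Metric.closedBall x ε, clarkeDir (f i) y v ≤ c) :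
    multiSubdiff f ε x ⊆ {u | ⟪u, v⟫ ≤ c} := by
  have hconv : Convex ℝ {u : H | ⟪u, v⟫ ≤ c} :=
    convex_halfSpace_le ((innerₛₗ ℝ).flip v).isLinear c
  have hclosed : IsClosed {u : H | ⟪u, v⟫ ≤ c} :=
    isClosed_le (continuous_id.inner continuous_const) continuous_const
  refine closure_minimal (convexHull_min (iUnion_subset fun i => ?_) hconv) hclosed
  refine closure_minimal (convexHull_min (iUnion₂_subset fun y hy => ?_) hconv) hclosed
  exact fun a ha => (ha v).trans (h i y hy)

end Clarke

theorem Filter.Tendsto.eventually_closedBall_subset {α X : Type*} [PseudoMetricSpace X]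
    {l : Filter α} {xs : α → X} {εs : α → ℝ} {x : X} (hx : Tendsto xs l (𝓝 x))
    (hε : Tendsto εs l (𝓝 0)) {s : Set X} (hs : s ∈ 𝓝 x) :
    ∀ᶠ j in l, Metric.closedBall (xs j) (εs j) ⊆ s := by
  obtain ⟨r, hr, hrs⟩ := Metric.mem_nhds_iff.1 hs
  filter_upwards [hx.eventually (Metric.ball_mem_nhds x (half_pos hr)),
    hε.eventually (gt_mem_nhds (half_pos hr))] with j hxj hεj
  exact (Metric.closedBall_subset_ball' (by linarith [Metric.mem_ball.1 hxj])).trans hrs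

theorem stmt7_general {H : Type*} [NormedAddCommGroup H] [InnerProductSpace ℝ H] [CompleteSpace H]
    {k : ℕ} (f : Fin k → H → ℝ) (x : H)
    (hlip : ∀ i, LocallyLipschitzNear (f i) x)
    (εs : ℕ → ℝ) (hε : Tendsto εs atTop (𝓝 (0 : ℝ)))
    (xs : ℕ → H) (hx : Tendsto xs atTop (𝓝 x))
    (ws : ℕ → H) (w : H)
    (hweak : ∀ v : H, Tendsto (fun j => ⟪ws j, v⟫) atTop (𝓝 ⟪w, v⟫))
    (hmem : ∀ j, ws j ∈ multiSubdiff f (εs j) (xs j)) :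
    w ∈ convexHull ℝ (⋃ i : Fin k, clarkeSubdiff (f i) x) := by
  by_contra hw
  obtain ⟨φ, u, hφD, hφw⟩ := geometric_hahn_banach_closed_point (convex_convexHull ℝ _)
    (isClosed_convexHull_iUnion_clarkeSubdiff hlip) hw
  set v := (InnerProductSpace.toDual ℝ H).symm φ
  have hφ : ∀ z, φ z = ⟪z, v⟫ := fun z => by
    rw [real_inner_comm, InnerProductSpace.toDual_symm_apply]
  have hdir : ∀ i, clarkeDir (f i) x v < u := fun i => by
    obtain ⟨L, U, hU, hL⟩ := (hlip i).exists_lipschitzOnWith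
    obtain ⟨a, ha, hav⟩ := exists_mem_clarkeSubdiff_inner_eq hL hU v
    rw [← hav, ← hφ]
    exact hφD a (subset_convexHull ℝ _ (mem_iUnion.2 ⟨i, ha⟩))
  have hnear : ∀ᶠ y in 𝓝 x, ∀ i, clarkeDir (f i) y v ≤ u := eventually_all.2 fun i => by
    obtain ⟨L, U, hU, hL⟩ := (hlip i).exists_lipschitzOnWith
    exact clarkeDir_eventually_le hL hU (hdir i)
  obtain ⟨s, hs, hsu⟩ := hnear.exists_mem
  have hle : ∀ᶠ j in atTop, ⟪ws j, v⟫ ≤ u :=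
    (hx.eventually_closedBall_subset hε hs).mono fun j hj =>
      multiSubdiff_subset_halfSpace f (εs j) (xs j) v (fun i y hy => hsu y (hj hy) i) (hmem j)
  have hlim := le_of_tendsto (hweak v) hle
  rw [← hφ] at hlim
  linarith

/-- Demi-closedness of the multiobjective ε-subdifferential: if `x_j → x`, `ε_j ↓ 0`,
`w_j ∈ F_{ε_j}(x_j)` and `w_j ⇀ w`, then `w ∈ F_0(x) = convexHull (⋃ i, ∂f_i(x))`. -/
theorem stmt7 {H : Type*} [NormedAddCommGroup H] [InnerProductSpace ℝ H] [CompleteSpace H]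
    {k : ℕ} (f : Fin k → H → ℝ) (x : H)
    (hlip : ∀ i, LocallyLipschitzNear (f i) x)
    (εs : ℕ → ℝ) (hεpos : ∀ j, 0 < εs j) (hε : Tendsto εs atTop (𝓝 (0 : ℝ)))
    (xs : ℕ → H) (hx : Tendsto xs atTop (𝓝 x))
    (ws : ℕ → H) (w : H)
    (hweak : ∀ v : H, Tendsto (fun j => ⟪ws j, v⟫) atTop (𝓝 ⟪w, v⟫))
    (hmem : ∀ j, ws j ∈ multiSubdiff f (εs j) (xs j)) :
    w ∈ convexHull ℝ (⋃ i : Fin k, clarkeSubdiff (f i) x) :=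
  stmt7_general f x hlip εs hε xs hx ws w hweak hmem
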